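/- For a finite-dimensional associative algebra 𝔄 over a field, the characteristic polynomial χ(λ,μ,F) = det(λA + μAᵀ) (with A the matrix of linear forms F(e_i e_j)) is divisible, as a polynomial in λ, μ with coefficients in polynomials on 𝔄*, by (λμ)^(dim ker A) · (λ+μ)^(ind 𝔄). -/

import Mathlib

open Matrix MvPolynomial Module

/-!
If `M Q` has `r` zero columns for some `Q` with `det Q ≠ 0`, then the same columns of
`(p M + q N) Q` are divisible by `q`, so `q ^ r` divides `det (p M + q N) * det Q`, and hence
`det (p M + q N)` when `q` is a prime dividing no nonzero constant. Such a `Q` exists with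
`r = dim ker M` over the fraction field: extend a basis of the kernel to a basis and clear
denominators.

With `λ = X 0` and `μ = X 1`, applied to `λ A + μ Aᵀ`, to `μ Aᵀ + λ A` (note that
`dim ker Aᵀ = dim ker A`) and to `μ (Aᵀ - A) + (λ + μ) A`, this gives divisibility of the
determinant by `μ ^ K`, `λ ^ K` and `(λ + μ) ^ ind`; as `λ`, `μ`, `λ + μ` are pairwise
non-associated primes, their product divides.
-/

theorem Matrix.pow_card_dvd_det_of_forall_dvd {S ι : Type*} [CommRing S] [Fintype ι]
    [DecidableEq ι] (A : Matrix ι ι S) (J : Finset ι) (q : S)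
    (h : ∀ i, ∀ j ∈ J, q ∣ A i j) : q ^ J.card ∣ A.det := by
  have hfactor : ∀ i j, ∃ b, A i j = (if j ∈ J then q else 1) * b := by
    intro i j
    split_ifs with hj
    · exact h i j hj
    · exact ⟨A i j, (one_mul _).symm⟩
  choose B hB using hfactor
  have hA : A = of B * diagonal fun j => if j ∈ J then q else 1 := by
    ext i j
    rw [mul_diagonal, of_apply, hB, mul_comm]
  rw [hA, det_mul, det_diagonal, Finset.prod_ite_mem, Finset.univ_inter, Finset.prod_const]
  exact dvd_mul_left _ _

theorem Module.Basis.sumExtend_inl {K V ι : Type*} [DivisionRing K] [AddCommGroup V]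
    [Module K V] {v : ι → V} (hv : LinearIndependent K v) (t : ι) :
    Basis.sumExtend hv (Sum.inl t) = v t := by
  rw [Basis.sumExtend, Basis.reindex_apply, Basis.extend_apply_self]
  rfl

theorem Matrix.exists_isUnit_det_mul_col_eq_zero {F ι m : Type*} [Field F] [Fintype ι]
    [DecidableEq ι] (M : Matrix m ι F) :
    ∃ (Q : Matrix ι ι F) (J : Finset ι), IsUnit Q.det ∧
      J.card = finrank F (LinearMap.ker M.mulVecLin) ∧ ∀ i, ∀ j ∈ J, (M * Q) i j = 0 := by
  set V := LinearMap.ker M.mulVecLin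
  let v := Module.finBasis F V
  have hv : LinearIndependent F (fun t => (v t : ι → F)) :=
    v.linearIndependent.map' V.subtype V.ker_subtype
  let w := Basis.sumExtend hv
  let e := w.indexEquiv (Pi.basisFun F ι)
  refine ⟨(Pi.basisFun F ι).toMatrix (w.reindex e),
    Finset.univ.map (Function.Embedding.inl.trans e.toEmbedding), ?_, by simp, ?_⟩
  · rw [← Basis.det_apply]
    exact Basis.isUnit_det _ _
  · intro i j hj
    obtain ⟨t, -, rfl⟩ := Finset.mem_map.mp hj
    have hker : M *ᵥ (v t : ι → F) = 0 := (v t).2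
    simpa [Basis.toMatrix_apply, w, Basis.sumExtend_inl, mul_apply, mulVec, dotProduct]
      using congrFun hker i

theorem Matrix.exists_det_ne_zero_mul_col_eq_zero {R F ι m : Type*} [CommRing R] [IsDomain R]
    [Field F] [Algebra R F] [IsFractionRing R F] [Fintype ι] [DecidableEq ι]
    (M : Matrix m ι R) :
    ∃ (Q : Matrix ι ι R) (J : Finset ι), Q.det ≠ 0 ∧
      J.card = finrank F (LinearMap.ker (M.map (algebraMap R F)).mulVecLin) ∧
      ∀ i, ∀ j ∈ J, (M * Q) i j = 0 := by
  obtain ⟨Q, J, hQ, hJ, hMQ⟩ := (M.map (algebraMap R F)).exists_isUnit_det_mul_col_eq_zero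
  obtain ⟨b, hb⟩ := IsLocalization.exist_integer_multiples_of_finite (nonZeroDivisors R)
    fun ij : ι × ι => Q ij.1 ij.2
  choose Q₀ hQ₀ using hb
  have hmap : (of fun i j => Q₀ (i, j)).map (algebraMap R F) = algebraMap R F b • Q := by
    ext i j
    simp [hQ₀ (i, j), Algebra.smul_def]
  have hb0 : algebraMap R F b ≠ 0 :=
    IsFractionRing.to_map_ne_zero_of_mem_nonZeroDivisors b.2
  refine ⟨of fun i j => Q₀ (i, j), J, ?_, hJ, ?_⟩
  · intro h
    have := congrArg (algebraMap R F) h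
    rw [RingHom.map_det, RingHom.mapMatrix_apply, hmap, det_smul, map_zero] at this
    exact mul_ne_zero (pow_ne_zero _ hb0) hQ.ne_zero this
  · intro i j hj
    apply IsFractionRing.injective R F
    rw [map_zero, ← map_apply (f := algebraMap R F), Matrix.map_mul, hmap, Matrix.mul_smul,
      Matrix.smul_apply, hMQ i j hj, smul_zero]

theorem Matrix.pow_finrank_ker_dvd_det_smul_map_add_smul_map {R F S ι : Type*} [CommRing R]
    [IsDomain R] [Field F] [Algebra R F] [IsFractionRing R F] [CommRing S] [IsDomain S]
    [Fintype ι] [DecidableEq ι] (f : R →+* S) (M N : Matrix ι ι R) (p : S) {q : S}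
    (hq : Prime q) (hqf : ∀ c, c ≠ 0 → ¬ q ∣ f c) :
    q ^ finrank F (LinearMap.ker (M.map (algebraMap R F)).mulVecLin) ∣
      (p • M.map f + q • N.map f).det := by
  obtain ⟨Q, J, hQ, hJ, hMQ⟩ := M.exists_det_ne_zero_mul_col_eq_zero (F := F)
  have hcol : ∀ i, ∀ j ∈ J, q ∣ ((p • M.map f + q • N.map f) * Q.map f) i j := by
    intro i j hj
    rw [add_mul, smul_mul, smul_mul, ← Matrix.map_mul, ← Matrix.map_mul, Matrix.add_apply,
      Matrix.smul_apply, map_apply, hMQ i j hj, map_zero, smul_zero, zero_add,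
      Matrix.smul_apply, smul_eq_mul]
    exact dvd_mul_right q _
  have hdvd := pow_card_dvd_det_of_forall_dvd _ J q hcol
  rw [det_mul, show (Q.map f).det = f Q.det from (f.map_det Q).symm, hJ] at hdvd
  exact hq.pow_dvd_of_dvd_mul_right _ (hqf _ hQ) hdvd

theorem Matrix.finrank_ker_mulVecLin_transpose {F ι : Type*} [Field F] [Fintype ι]
    (A : Matrix ι ι F) :
    finrank F (LinearMap.ker Aᵀ.mulVecLin) = finrank F (LinearMap.ker A.mulVecLin) := by
  have hA := LinearMap.finrank_range_add_finrank_ker A.mulVecLin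
  have hAt := LinearMap.finrank_range_add_finrank_ker Aᵀ.mulVecLin
  have hrank : finrank F (LinearMap.range Aᵀ.mulVecLin) =
      finrank F (LinearMap.range A.mulVecLin) :=
    rank_transpose A
  omega

theorem Prime.mul_pow_dvd_of_not_dvd {M : Type*} [CommMonoidWithZero M] [IsCancelMulZero M]
    {p a d : M} (hp : Prime p) (ha : ¬ p ∣ a) (had : a ∣ d) {m : ℕ} (hpd : p ^ m ∣ d) :
    a * p ^ m ∣ d := by
  obtain ⟨u, rfl⟩ := had
  exact mul_dvd_mul_left a (hp.pow_dvd_of_dvd_mul_left m ha hpd)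

namespace MvPolynomial

variable {σ R : Type*} [CommRing R]

theorem not_dvd_C_of_constantCoeff_eq_zero {p : MvPolynomial σ R} (hp : constantCoeff p = 0)
    {c : R} (hc : c ≠ 0) : ¬ p ∣ C c := by
  rintro ⟨u, hu⟩
  apply hc
  simpa [hp] using congrArg constantCoeff hu

variable [IsDomain R]

theorem prime_X_zero_add_X_one : Prime (X 0 + X 1 : MvPolynomial (Fin 2) R) := by
  rw [← MulEquiv.prime_iff (finSuccEquiv R 1).toMulEquiv]
  have : finSuccEquiv R 1 (X 0 + X 1) = Polynomial.X - Polynomial.C (-X 0) := by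
    simp [finSuccEquiv_X_zero, ← finSuccEquiv_X_succ]
  simpa [this] using Polynomial.prime_X_sub_C (-X 0 : MvPolynomial (Fin 1) R)

theorem X_zero_add_X_one_not_dvd_X (i : Fin 2) :
    ¬ (X 0 + X 1 : MvPolynomial (Fin 2) R) ∣ X i := by
  rintro ⟨u, hu⟩
  have := congrArg (eval fun j => if j = i then 1 else -1) hu
  fin_cases i <;> simp at this

end MvPolynomial

namespace Matrix

variable {R : Type*} (F : Type*) {ι : Type*} [CommRing R] [IsDomain R] [Field F] [Algebra R F]
  [IsFractionRing R F] [Fintype ι] [DecidableEq ι]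

noncomputable def transposePencil (A : Matrix ι ι R) : Matrix ι ι (MvPolynomial (Fin 2) R) :=
  (X 0 : MvPolynomial (Fin 2) R) • A.map C + (X 1 : MvPolynomial (Fin 2) R) • Aᵀ.map C

theorem X_one_pow_dvd_det_transposePencil (A : Matrix ι ι R) :
    X 1 ^ finrank F (LinearMap.ker (A.map (algebraMap R F)).mulVecLin) ∣
      A.transposePencil.det :=
  pow_finrank_ker_dvd_det_smul_map_add_smul_map C A Aᵀ _ X_prime
    fun _ => not_dvd_C_of_constantCoeff_eq_zero (by simp)

theorem X_zero_pow_dvd_det_transposePencil (A : Matrix ι ι R) :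
    X 0 ^ finrank F (LinearMap.ker (A.map (algebraMap R F)).mulVecLin) ∣
      A.transposePencil.det := by
  rw [← finrank_ker_mulVecLin_transpose, ← transpose_map, transposePencil, add_comm]
  simpa only [transpose_transpose] using
    pow_finrank_ker_dvd_det_smul_map_add_smul_map (F := F) C Aᵀ A (X 1) X_prime
      fun _ => not_dvd_C_of_constantCoeff_eq_zero (by simp)

theorem X_zero_add_X_one_pow_dvd_det_transposePencil (A : Matrix ι ι R) :
    (X 0 + X 1) ^ finrank F (LinearMap.ker ((A - Aᵀ).map (algebraMap R F)).mulVecLin) ∣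
      A.transposePencil.det := by
  have hpencil : A.transposePencil = (X 1 : MvPolynomial (Fin 2) R) • (Aᵀ - A).map C +
      (X 0 + X 1 : MvPolynomial (Fin 2) R) • A.map C := by
    ext i j : 1
    simp only [transposePencil, add_apply, smul_apply, map_apply, sub_apply, map_sub,
      smul_eq_mul]
    ring
  have hker : LinearMap.ker ((A - Aᵀ).map (algebraMap R F)).mulVecLin =
      LinearMap.ker ((Aᵀ - A).map (algebraMap R F)).mulVecLin := by
    ext v
    rw [← neg_sub, Matrix.map_neg _ (map_neg (algebraMap R F))]
    simp only [LinearMap.mem_ker, mulVecLin_apply, neg_mulVec, neg_eq_zero]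
  rw [hker, hpencil]
  exact pow_finrank_ker_dvd_det_smul_map_add_smul_map C _ A _ prime_X_zero_add_X_one
    fun _ => not_dvd_C_of_constantCoeff_eq_zero (by simp)

theorem dvd_det_transposePencil (A : Matrix ι ι R) :
    (X 0 * X 1) ^ finrank F (LinearMap.ker (A.map (algebraMap R F)).mulVecLin) *
      (X 0 + X 1) ^ finrank F (LinearMap.ker ((A - Aᵀ).map (algebraMap R F)).mulVecLin) ∣
      A.transposePencil.det := by
  have hX : ¬ (X 1 : MvPolynomial (Fin 2) R) ∣ X 0 := by simp [X_dvd_X]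
  have hXX : ¬ (X 0 + X 1 : MvPolynomial (Fin 2) R) ∣
      X 0 ^ finrank F (LinearMap.ker (A.map (algebraMap R F)).mulVecLin) *
        X 1 ^ finrank F (LinearMap.ker (A.map (algebraMap R F)).mulVecLin) := fun h => by
    rcases prime_X_zero_add_X_one.dvd_or_dvd h with h | h <;>
      exact X_zero_add_X_one_not_dvd_X _ (prime_X_zero_add_X_one.dvd_of_dvd_pow h)
  rw [mul_pow]
  refine prime_X_zero_add_X_one.mul_pow_dvd_of_not_dvd hXX ?_
    (X_zero_add_X_one_pow_dvd_det_transposePencil F A)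
  exact X_prime.mul_pow_dvd_of_not_dvd (fun h => hX (X_prime.dvd_of_dvd_pow h))
    (X_zero_pow_dvd_det_transposePencil F A) (X_one_pow_dvd_det_transposePencil F A)

end Matrix

theorem char_poly_divisibility_general {k : Type*} [Field k] {n : ℕ}
    -- `Amat` : the multiplication matrix, with entries the linear forms `F ↦ F (b i * b j)`
    -- written as polynomials on `𝔄*` in the coordinates dual to `b`
    (Amat : Matrix (Fin n) (Fin n) (MvPolynomial (Fin n) k))
    (K indA : ℕ)
    (hK : K = Module.finrank (FractionRing (MvPolynomial (Fin n) k))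
      (LinearMap.ker (Amat.map (algebraMap (MvPolynomial (Fin n) k)
        (FractionRing (MvPolynomial (Fin n) k)))).mulVecLin))
    (hind : indA = Module.finrank (FractionRing (MvPolynomial (Fin n) k))
      (LinearMap.ker ((Amat - Amatᵀ).map (algebraMap (MvPolynomial (Fin n) k)
        (FractionRing (MvPolynomial (Fin n) k)))).mulVecLin)) :
    ((X 0 : MvPolynomial (Fin 2) (MvPolynomial (Fin n) k)) * X 1) ^ K * (X 0 + X 1) ^ indA ∣
      Matrix.det ((X 0 : MvPolynomial (Fin 2) (MvPolynomial (Fin n) k)) •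
          Amat.map (MvPolynomial.C : _ → MvPolynomial (Fin 2) (MvPolynomial (Fin n) k))
        + (X 1 : MvPolynomial (Fin 2) (MvPolynomial (Fin n) k)) •
          Amatᵀ.map (MvPolynomial.C : _ → MvPolynomial (Fin 2) (MvPolynomial (Fin n) k))) := by
  subst hK hind
  exact dvd_det_transposePencil _ Amat

/-- The characteristic polynomial of a finite-dimensional associative algebra is divisible by
`(λμ)^(dim ker A) * (λ+μ)^(ind 𝔄)`, where `A` is the multiplication matrix over the field of
rational functions on `𝔄*` and `ind 𝔄 = dim ker (A - Aᵀ)` over that field. -/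
theorem char_poly_divisibility {k 𝔄 : Type*} [Field k] [NonUnitalRing 𝔄] [Module k 𝔄]
    [SMulCommClass k 𝔄 𝔄] [IsScalarTower k 𝔄 𝔄] {n : ℕ} (b : Basis (Fin n) k 𝔄)
    -- `Amat` : the multiplication matrix, with entries the linear forms `F ↦ F (b i * b j)`
    -- written as polynomials on `𝔄*` in the coordinates dual to `b`
    (Amat : Matrix (Fin n) (Fin n) (MvPolynomial (Fin n) k))
    (hAmat : ∀ i j, Amat i j = ∑ m, MvPolynomial.C (b.repr (b i * b j) m) * X m)
    (K indA : ℕ)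
    (hK : K = Module.finrank (FractionRing (MvPolynomial (Fin n) k))
      (LinearMap.ker (Amat.map (algebraMap (MvPolynomial (Fin n) k)
        (FractionRing (MvPolynomial (Fin n) k)))).mulVecLin))
    (hind : indA = Module.finrank (FractionRing (MvPolynomial (Fin n) k))
      (LinearMap.ker ((Amat - Amatᵀ).map (algebraMap (MvPolynomial (Fin n) k)
        (FractionRing (MvPolynomial (Fin n) k)))).mulVecLin)) :
    ((X 0 : MvPolynomial (Fin 2) (MvPolynomial (Fin n) k)) * X 1) ^ K * (X 0 + X 1) ^ indA ∣
      Matrix.det ((X 0 : MvPolynomial (Fin 2) (MvPolynomial (Fin n) k)) •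
          Amat.map (MvPolynomial.C : _ → MvPolynomial (Fin 2) (MvPolynomial (Fin n) k))
        + (X 1 : MvPolynomial (Fin 2) (MvPolynomial (Fin n) k)) •
          Amatᵀ.map (MvPolynomial.C : _ → MvPolynomial (Fin 2) (MvPolynomial (Fin n) k))) :=
  char_poly_divisibility_general Amat K indA hK hind
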